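/- The following are equivalent: (i) every natural number N satisfies at least one of: (a) N > 2 and N is not of the form 2^n + 1 for any n ≥ 1; (b) N has a proper divisor d with 1 < d < N and d ∣ N; (c) N ∈ {0, 1, 2, 3, 5, 17, 257, 65537}; and (ii) every prime of the form 2^(2^n) + 1 (for some natural number n) belongs to {3, 5, 17, 257, 65537}. (This is the arithmetic content of the theorem that the practical regular expression α₃ = ((aa)+a)\1*a | (a+a)\3+ | a^0 | a^1 | a^2 | a^3 | a^5 | a^17 | a^257 | a^65537 over the one-letter alphabet is equivalent to a* if and only if 3, 5, 17, 257 and 65537 are the only Fermat primes; hence an effective decision procedure for equivalence of practical regular expressions over a single-letter alphabet would resolve the open problem about Fermat primes.) -/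
import Mathlib

/-- The expression `α₃` over a one-letter alphabet is equivalent to `a*` if and only if
3, 5, 17, 257 and 65537 are the only Fermat primes. -/
theorem alpha3_universal_iff_no_new_fermat_primes :
    (∀ N : ℕ,
        (2 < N ∧ ∀ n : ℕ, 1 ≤ n → N ≠ 2 ^ n + 1) ∨
        (∃ d : ℕ, 1 < d ∧ d < N ∧ d ∣ N) ∨
        N ∈ ({0, 1, 2, 3, 5, 17, 257, 65537} : Set ℕ)) ↔
      (∀ p : ℕ, p.Prime → (∃ n : ℕ, p = 2 ^ (2 ^ n) + 1) →
        p ∈ ({3, 5, 17, 257, 65537} : Set ℕ)) := by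
  constructor
  · intro h p hp hex
    obtain ⟨n, rfl⟩ := hex
    have h2 : (1:ℕ) ≤ 2 ^ n := Nat.one_le_two_pow
    rcases h (2 ^ 2 ^ n + 1) with ⟨_, ha⟩ | ⟨d, hd1, hd2, hd3⟩ | hc
    · exact absurd rfl (ha _ h2)
    · rcases (Nat.Prime.eq_one_or_self_of_dvd hp d hd3) with h1 | h1 <;> omega
    · have h3 : (3:ℕ) ≤ 2 ^ 2 ^ n + 1 := by
        have : (2:ℕ) ≤ 2 ^ 2 ^ n := Nat.one_lt_two_pow_iff.mpr (by positivity)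
        omega
      simp only [Set.mem_insert_iff, Set.mem_singleton_iff] at hc ⊢
      omega
  · intro h N
    by_cases hsmall : N = 0 ∨ N = 1 ∨ N = 2 ∨ N = 3
    · right; right; simp only [Set.mem_insert_iff, Set.mem_singleton_iff]; omega
    push_neg at hsmall
    have hN4 : 4 ≤ N := by omega
    by_cases hp : N.Prime
    · by_cases hform : ∀ n : ℕ, 1 ≤ n → N ≠ 2 ^ n + 1
      · exact Or.inl ⟨by omega, hform⟩
      · push_neg at hform
        obtain ⟨m, hm1, rfl⟩ := hform
        obtain ⟨k, rfl⟩ := Nat.pow_of_pow_add_prime one_lt_two (by omega) hp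
        have := h _ hp ⟨k, rfl⟩
        right; right
        simp only [Set.mem_insert_iff, Set.mem_singleton_iff] at this ⊢
        omega
    · obtain ⟨d, hd, hd1, hdN⟩ := Nat.exists_dvd_of_not_prime2 (by omega) hp
      exact Or.inr (Or.inl ⟨d, hd1, hdN, hd⟩)
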